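/- Lemma (strong-agreeable): Let α ∈ (0,1) and β ∈ (0,1/2], let J be a finite set of jobs feasible on m machines, and let j ∈ J be a job with ℓ_j ≥ 1. Then the number of jobs j' ∈ J \ {j} such that j' is α-tight, ℓ_{j'} ≤ ℓ_j, and j and j' are β-agreeable, is at most 8m/(αβ). -/

import Mathlib

/-- A job given by integer release date `r`, deadline `d`, and processing time `p`. -/
structure Job where
  r : ℤ
  d : ℤ
  p : ℤ
deriving DecidableEq

/-- A job is valid if `1 ≤ p` and `r + p ≤ d`. -/
def Job.valid (j : Job) : Prop := 1 ≤ j.p ∧ j.r + j.p ≤ j.d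

/-- The interval `I(j) = {t ∈ ℤ : r ≤ t < d}` of a job. -/
noncomputable def Job.interval (j : Job) : Finset ℤ := Finset.Ico j.r j.d

/-- The laxity `ℓ_j = d - r - p` of a job. -/
def Job.lax (j : Job) : ℤ := j.d - j.r - j.p

/-- The contribution `C(j, I) = max {0, |I ∩ I(j)| - ℓ_j}` of a job to a finite set `I ⊆ ℤ`. -/
noncomputable def contribution (j : Job) (I : Finset ℤ) : ℤ :=
  max 0 (((I ∩ j.interval).card : ℤ) - j.lax)

/-- A finite set of jobs `J` is feasible on `m` machines. -/
def Feasible (J : Finset Job) (m : ℕ) : Prop :=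
  ∃ σ : ℤ → Finset Job,
    (∀ t, σ t ⊆ J) ∧
    (∀ t, (σ t).card ≤ m) ∧
    (∀ t, ∀ j ∈ σ t, j.r ≤ t ∧ t < j.d) ∧
    (∀ j ∈ J, ((Finset.Ico j.r j.d).filter (fun t => j ∈ σ t)).card = j.p.toNat)

/-- A job is `α`-tight if `p_j > α (d_j - r_j)`. -/
def AlphaTight (α : ℝ) (j : Job) : Prop := α * ((j.d : ℝ) - (j.r : ℝ)) < (j.p : ℝ)

/-- The `β`-interval `I_β(j) = [r_j + βℓ_j, d_j - βℓ_j)` of a job (a real interval). -/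
def betaInterval (β : ℝ) (j : Job) : Set ℝ :=
  Set.Ico ((j.r : ℝ) + β * (j.lax : ℝ)) ((j.d : ℝ) - β * (j.lax : ℝ))

/-- Two jobs are agreeable if `(r_j - r_{j'})·(d_j - d_{j'}) ≥ 0`. -/
def Agreeable (j j' : Job) : Prop :=
  0 ≤ ((j.r : ℝ) - (j'.r : ℝ)) * ((j.d : ℝ) - (j'.d : ℝ))

/-- Two jobs are `β`-agreeable if they are agreeable and their `β`-intervals intersect. -/
def BetaAgreeable (β : ℝ) (j j' : Job) : Prop :=
  Agreeable j j' ∧ (betaInterval β j ∩ betaInterval β j').Nonempty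

/-! If `j'` is `β`-agreeable with `j`, then `r_{j'} ≤ c ≤ d_{j'}` for `c = r_j` or `c = d_j`, and
`d_{j'} - r_{j'} ≥ βℓ_j`. Around such an anchor `c`, every `α`-tight `j'` with `ℓ_{j'} ≤ ℓ_j` must be processed
for at least `αβℓ_j` time units in the window `[c - 2ℓ_j, c + 2ℓ_j)`: either `I(j')` fits in the
window and `p_{j'} > α(d_{j'} - r_{j'}) ≥ αβℓ_j`, or it meets the window in at least `2ℓ_j` slots
and `j'` is idle in at most `ℓ_{j'} ≤ ℓ_j` of them. The window offers only `4mℓ_j` units of machine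
time, so each of the two anchors accounts for at most `4m/(αβ)` jobs. -/

open Finset

namespace Job

lemma lax_nonneg {j : Job} (hj : j.valid) : 0 ≤ j.lax := by
  unfold lax; unfold valid at hj; omega

lemma card_interval {j : Job} (hj : j.valid) : (#j.interval : ℤ) = j.d - j.r := by
  unfold valid at hj
  rw [interval, Int.card_Ico, Int.toNat_of_nonneg (by omega)]

def Spans (L : ℝ) (c : ℤ) (j : Job) : Prop := j.r ≤ c ∧ c ≤ j.d ∧ L ≤ (j.d : ℝ) - j.r

end Job

/-- A job can be idle in at most `ℓ_j` of the slots of its interval. -/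
lemma contribution_le_card_filter {j : Job} (hj : j.valid) (P : ℤ → Prop) [DecidablePred P]
    (hP : #(j.interval.filter P) = j.p.toNat) (I : Finset ℤ) :
    contribution j I ≤ #(I.filter P) := by
  have hsub : I ∩ j.interval ⊆ j.interval.filter (¬ P ·) ∪ I.filter P := by
    intro t ht
    rw [mem_inter] at ht
    by_cases hPt : P t <;> simp [ht, hPt]
  have hcover := (card_le_card hsub).trans (card_union_le _ _)
  have hsplit := card_filter_add_card_filter_not (s := j.interval) P
  have hlen := Job.card_interval hj
  have hp : (j.p.toNat : ℤ) = j.p := Int.toNat_of_nonneg (by unfold Job.valid at hj; omega)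
  unfold contribution Job.lax
  omega

theorem Feasible.sum_contribution_le {J : Finset Job} {m : ℕ} (hfeas : Feasible J m)
    (hJ : ∀ j ∈ J, j.valid) (I : Finset ℤ) :
    ∑ j ∈ J, contribution j I ≤ m * #I := by
  classical
  obtain ⟨σ, -, hσm, -, hσp⟩ := hfeas
  have hbusy : ∑ j ∈ J, #(I.bipartiteAbove (fun j t => j ∈ σ t) j) ≤ #I * m := by
    rw [sum_card_bipartiteAbove_eq_sum_card_bipartiteBelow]
    refine sum_le_card_nsmul _ _ _ fun t _ => (card_le_card fun j hj => ?_).trans (hσm t)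
    exact (mem_filter.mp hj).2
  calc ∑ j ∈ J, contribution j I
      ≤ ∑ j ∈ J, (#(I.bipartiteAbove (fun j t => j ∈ σ t) j) : ℤ) :=
        sum_le_sum fun j hj => contribution_le_card_filter (hJ j hj) _ (hσp j hj) I
    _ ≤ m * #I := by rw [mul_comm]; exact_mod_cast hbusy

theorem Feasible.card_mul_le {J : Finset Job} {m : ℕ} (hfeas : Feasible J m)
    (hJ : ∀ j ∈ J, j.valid) {F : Finset Job} (hFJ : F ⊆ J) {x : ℝ} {I : Finset ℤ}
    (hF : ∀ j ∈ F, x ≤ contribution j I) :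
    #F * x ≤ m * #I := by
  have hcap : ∑ j ∈ J, (contribution j I : ℝ) ≤ m * #I := by
    exact_mod_cast hfeas.sum_contribution_le hJ I
  calc #F * x ≤ ∑ j ∈ F, (contribution j I : ℝ) := by
        simpa [nsmul_eq_mul] using card_nsmul_le_sum F _ x hF
    _ ≤ ∑ j ∈ J, (contribution j I : ℝ) :=
        sum_le_sum_of_subset_of_nonneg hFJ fun j _ _ => by exact_mod_cast le_max_left _ _
    _ ≤ m * #I := hcap

lemma sub_sub_lax_le_contribution (j : Job) (a b : ℤ) :
    min b j.d - max a j.r - j.lax ≤ contribution j (Ico a b) := by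
  unfold contribution
  rw [Job.interval, Ico_inter_Ico, Int.card_Ico]
  exact le_max_of_le_right (by omega)

lemma mul_le_contribution_window {α β : ℝ} (hα : 0 ≤ α) (hαβ : α * β ≤ 1) {j : Job}
    (hj : j.valid) (ht : AlphaTight α j) {ℓ c : ℤ} (hℓ : j.lax ≤ ℓ) (hspan : j.Spans (β * ℓ) c) :
    α * β * ℓ ≤ contribution j (Ico (c - 2 * ℓ) (c + 2 * ℓ)) := by
  obtain ⟨hrc, hcd, hlen⟩ := hspan
  have hℓ0 : 0 ≤ ℓ := (Job.lax_nonneg hj).trans hℓ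
  have hcontr := sub_sub_lax_le_contribution j (c - 2 * ℓ) (c + 2 * ℓ)
  have hfits_or_long : j.p ≤ contribution j (Ico (c - 2 * ℓ) (c + 2 * ℓ)) ∨
      ℓ ≤ contribution j (Ico (c - 2 * ℓ) (c + 2 * ℓ)) := by
    unfold Job.lax at hcontr hℓ hℓ0; omega
  rcases hfits_or_long with hp | hℓc
  · calc α * β * ℓ ≤ α * ((j.d : ℝ) - j.r) := by
          rw [mul_assoc]; exact mul_le_mul_of_nonneg_left hlen hα
      _ ≤ j.p := ht.le
      _ ≤ _ := by exact_mod_cast hp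
  · calc α * β * ℓ ≤ ℓ := mul_le_of_le_one_left (by exact_mod_cast hℓ0) hαβ
      _ ≤ _ := by exact_mod_cast hℓc

theorem Feasible.card_spans_mul_le {J : Finset Job} {m : ℕ} (hfeas : Feasible J m)
    (hJ : ∀ j ∈ J, j.valid) {α β : ℝ} (hα : 0 ≤ α) (hαβ : α * β ≤ 1) {ℓ : ℤ} (hℓ : 0 < ℓ)
    (c : ℤ) {F : Finset Job} (hFJ : F ⊆ J)
    (hF : ∀ j ∈ F, AlphaTight α j ∧ j.lax ≤ ℓ ∧ j.Spans (β * ℓ) c) :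
    #F * (α * β) ≤ 4 * m := by
  have hwindow : (#(Ico (c - 2 * ℓ) (c + 2 * ℓ)) : ℝ) = 4 * ℓ := by
    rw [Int.card_Ico, show c + 2 * ℓ - (c - 2 * ℓ) = 4 * ℓ by ring]
    exact_mod_cast Int.toNat_of_nonneg (by omega)
  have hcount := hfeas.card_mul_le hJ hFJ fun j hj =>
    mul_le_contribution_window hα hαβ (hJ j (hFJ hj)) (hF j hj).1 (hF j hj).2.1 (hF j hj).2.2
  rw [hwindow] at hcount
  have hℓR : (0 : ℝ) < ℓ := by exact_mod_cast hℓ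
  nlinarith

lemma BetaAgreeable.spans {β : ℝ} (hβ : 0 ≤ β) {j j' : Job} (h : BetaAgreeable β j j')
    (hℓ : 0 ≤ j.lax) (hℓ' : 0 ≤ j'.lax) :
    j'.Spans (β * j.lax) j.r ∨ j'.Spans (β * j.lax) j.d := by
  obtain ⟨hagree, x, ⟨hxr, hxd⟩, ⟨hxr', hxd'⟩⟩ := h
  have hβℓ : 0 ≤ β * (j.lax : ℝ) := mul_nonneg hβ (by exact_mod_cast hℓ)
  have hβℓ' : 0 ≤ β * (j'.lax : ℝ) := mul_nonneg hβ (by exact_mod_cast hℓ')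
  rcases mul_nonneg_iff.mp hagree with ⟨hr, hd⟩ | ⟨hr, hd⟩
  · refine .inl ⟨by exact_mod_cast sub_nonneg.mp hr, ?_, by linarith⟩
    exact_mod_cast (show (j.r : ℝ) < j'.d by linarith).le
  · refine .inr ⟨?_, by exact_mod_cast sub_nonpos.mp hd, by linarith⟩
    exact_mod_cast (show (j'.r : ℝ) < j.d by linarith).le

theorem strong_agreeable_bound_general
    (α β : ℝ) (hα : α ∈ Set.Ioo (0 : ℝ) 1) (hβ : β ∈ Set.Ioc (0 : ℝ) (1 / 2))
    (J : Finset Job) (hJ : ∀ j ∈ J, j.valid) (m : ℕ) (hfeas : Feasible J m)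
    (j : Job) (hlax : 1 ≤ j.lax) :
    ({j' : Job | j' ∈ J ∧ j' ≠ j ∧ AlphaTight α j' ∧ j'.lax ≤ j.lax ∧
        BetaAgreeable β j j'}.ncard : ℝ) ≤ 8 * (m : ℝ) / (α * β) := by
  classical
  obtain ⟨⟨hα0, hα1⟩, hβ0, hβ2⟩ := hα, hβ
  have hαβ : α * β ≤ 1 := by nlinarith
  set F := J.filter fun j' => j' ≠ j ∧ AlphaTight α j' ∧ j'.lax ≤ j.lax ∧ BetaAgreeable β j j'
  have hncard : {j' : Job | j' ∈ J ∧ j' ≠ j ∧ AlphaTight α j' ∧ j'.lax ≤ j.lax ∧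
      BetaAgreeable β j j'}.ncard = #F := by
    rw [← Set.ncard_coe_finset]; congr 1; ext; simp [F]
  have hF : ∀ j' ∈ F, AlphaTight α j' ∧ j'.lax ≤ j.lax ∧
      (j'.Spans (β * j.lax) j.r ∨ j'.Spans (β * j.lax) j.d) := by
    intro j' hj'
    obtain ⟨hj'J, -, ht, hℓ', hβj'⟩ := mem_filter.mp hj'
    exact ⟨ht, hℓ', hβj'.spans hβ0.le (by omega) (Job.lax_nonneg (hJ j' hj'J))⟩
  have hcover : F = F.filter (·.Spans (β * j.lax) j.r) ∪ F.filter (·.Spans (β * j.lax) j.d) := by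
    rw [← filter_or, filter_true_of_mem fun j' hj' => (hF j' hj').2.2]
  have hcard : (#F : ℝ) ≤ #(F.filter (·.Spans (β * j.lax) j.r)) +
      #(F.filter (·.Spans (β * j.lax) j.d)) := by
    exact_mod_cast hcover ▸ card_union_le _ _
  have hanchor (c : ℤ) : #(F.filter (·.Spans (β * j.lax) c)) * (α * β) ≤ 4 * m :=
    hfeas.card_spans_mul_le hJ hα0.le hαβ (by omega) c ((filter_subset _ _).trans (filter_subset _ _))
      fun j' hj' => ⟨(hF j' (mem_filter.mp hj').1).1, (hF j' (mem_filter.mp hj').1).2.1,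
        (mem_filter.mp hj').2⟩
  rw [hncard, le_div_iff₀ (mul_pos hα0 hβ0)]
  nlinarith [hanchor j.r, hanchor j.d, mul_pos hα0 hβ0]

/-- strong-agreeable: at most `8m/(αβ)` α-tight jobs `j' ≠ j` of laxity
at most `ℓ_j` can be `β`-agreeable with `j`. -/
theorem strong_agreeable_bound
    (α β : ℝ) (hα : α ∈ Set.Ioo (0 : ℝ) 1) (hβ : β ∈ Set.Ioc (0 : ℝ) (1 / 2))
    (J : Finset Job) (hJ : ∀ j ∈ J, j.valid) (m : ℕ) (hfeas : Feasible J m)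
    (j : Job) (hj : j ∈ J) (hlax : 1 ≤ j.lax) :
    ({j' : Job | j' ∈ J ∧ j' ≠ j ∧ AlphaTight α j' ∧ j'.lax ≤ j.lax ∧
        BetaAgreeable β j j'}.ncard : ℝ) ≤ 8 * (m : ℝ) / (α * β) :=
  strong_agreeable_bound_general α β hα hβ J hJ m hfeas j hlax
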